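/- Let X = (X_1,...,X_n) be independent random elements, X' an independent copy, f : 𝒳^n → ℝ^d measurable with f(X) centered and square-integrable, and set T_A := ∑_{j ∉ A} [Δ_j f(X)][Δ_j f(X^A)]^T ∈ ℝ^{d×d} and T := (1/2) ∑_{A ⊊ [n]} k_{n,A} T_A with k_{n,A} = 1/(C(n,|A|)(n−|A|)). Then E[T] equals the covariance matrix of W = f(X), i.e., (E T)_{kl} = Cov(f_k(X), f_l(X)) for all k, l ∈ [d]. -/

import Mathlib

/-!
Swapping `X_i ↔ X'_i` for `i ∈ B` preserves the joint law of the `2n` independent coordinates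
(as `X'_i ~ X_i`) and turns `X^A` into `X^{A ∆ B}`, so the law of the family `(X^A)_A` is
invariant under `A ↦ A ∆ B`. With `B = {j}` and `j ∉ A` this exchanges `X` with `X^{j}` and
flips the sign of `Δ_j f(X^A)`, so `E[Δ_j f_k(X) Δ_j f_l(X^A)] = 2 (a(A) - a(A ∪ {j}))` with
`a(A) = E[f_k(X) f_l(X^A)]`. The weights `k_{n,A}` make the sum over `A` telescope to
`a(∅) - a([n])`, and `a([n]) = E f_k(X) E f_l(X)` by independence of `X` and `X'`.
-/

open MeasureTheory ProbabilityTheory Finset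
open scoped symmDiff ENNReal

section Telescoping

/-- The weight `k_{n,A}` for `|A| = m`. -/
noncomputable def resamplingWeight (n m : ℕ) : ℝ := 1 / ((n.choose m : ℝ) * (n - m))

lemma sub_mul_resamplingWeight {n m : ℕ} (hmn : m ≤ n) :
    ((n : ℝ) - m) * resamplingWeight n m = (n.choose m : ℝ)⁻¹ - if m = n then 1 else 0 := by
  unfold resamplingWeight
  split_ifs with h
  · simp [h]
  · have hsub : (n : ℝ) - m ≠ 0 := sub_ne_zero.2 (by exact_mod_cast Ne.symm h)
    have hC : (n.choose m : ℝ) ≠ 0 := by exact_mod_cast (Nat.choose_pos hmn).ne'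
    rw [sub_zero]
    field_simp

lemma mul_resamplingWeight_pred {n m : ℕ} (hmn : m ≤ n) :
    (m : ℝ) * resamplingWeight n (m - 1) = (n.choose m : ℝ)⁻¹ - if m = 0 then 1 else 0 := by
  cases m with
  | zero => simp
  | succ k =>
    have hC : (n.choose (k + 1) : ℝ) ≠ 0 := by exact_mod_cast (Nat.choose_pos hmn).ne'
    have hrec : (n.choose (k + 1) : ℝ) * (k + 1) = n.choose k * (n - k) := by
      rw [← Nat.cast_sub (by omega)]
      exact_mod_cast Nat.choose_succ_right_eq n k
    simp only [resamplingWeight, add_tsub_cancel_right, ← hrec]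
    push_cast
    field_simp
    simp

variable {ι : Type*} [DecidableEq ι]

lemma Finset.sum_sum_compl_insert_eq_sum_sum_erase {M : Type*} [Fintype ι] [AddCommMonoid M]
    (F : Finset ι → Finset ι → M) :
    ∑ A, ∑ j ∈ Aᶜ, F A (insert j A) = ∑ B, ∑ j ∈ B, F (B.erase j) B := by
  rw [sum_sigma', sum_sigma']
  refine sum_nbij' (fun p => ⟨insert p.2 p.1, p.2⟩) (fun p => ⟨p.1.erase p.2, p.2⟩)
    ?_ ?_ ?_ ?_ ?_ <;> rintro ⟨A, j⟩ h <;> simp_all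

theorem sum_resamplingWeight_mul_sum_sub_insert [Fintype ι] (a : Finset ι → ℝ) :
    ∑ A ∈ (univ : Finset ι).powerset.filter (· ≠ univ),
      resamplingWeight (Fintype.card ι) A.card * ∑ j ∈ Aᶜ, (a A - a (insert j A)) =
      a ∅ - a univ := by
  set n := Fintype.card ι
  have hcard (A : Finset ι) : A.card ≤ n := card_le_univ A
  rw [sum_filter_of_ne fun A _ hA => by rintro rfl; simp at hA, powerset_univ]
  calc _ = ∑ A, ∑ j ∈ Aᶜ, resamplingWeight n A.card * a A
        - ∑ A, ∑ j ∈ Aᶜ, resamplingWeight n A.card * a (insert j A) := by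
        simp only [← sum_sub_distrib, mul_sum, mul_sub]
    _ = ∑ A, ((n.choose A.card : ℝ)⁻¹ * a A - if A = univ then a A else 0)
        - ∑ B, ((n.choose B.card : ℝ)⁻¹ * a B - if B = ∅ then a B else 0) := by
        rw [sum_sum_compl_insert_eq_sum_sum_erase fun A B => resamplingWeight n A.card * a B]
        congr 1 <;> refine sum_congr rfl fun A _ => ?_
        · rw [sum_const, nsmul_eq_mul, ← mul_assoc, card_compl, Nat.cast_sub (hcard A),
            sub_mul_resamplingWeight (hcard A)]
          simp [n, card_eq_iff_eq_univ, sub_mul]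
        · rw [sum_congr rfl fun j hj => by rw [card_erase_of_mem hj], sum_const, nsmul_eq_mul,
            ← mul_assoc, mul_resamplingWeight_pred (hcard A)]
          simp [sub_mul]
    _ = a ∅ - a univ := by simp [sum_sub_distrib]

end Telescoping

section SwapCoordinates

variable {ι : Type*} [DecidableEq ι]

/- A point `y : ι ⊕ ι → 𝒳` stands for the pair `(x, x')`; `y ∘ selectSum A` is `x^A`, and
`y ∘ swapSum B` exchanges `x_i` and `x'_i` for `i ∈ B`. -/
def selectSum (A : Finset ι) (i : ι) : ι ⊕ ι := if i ∈ A then .inr i else .inl i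

def swapSum (B : Finset ι) : ι ⊕ ι → ι ⊕ ι := Sum.elim (selectSum B) (Sum.swap ∘ selectSum B)

lemma swapSum_involutive (B : Finset ι) : Function.Involutive (swapSum B) := by
  rintro (i | i) <;> by_cases hi : i ∈ B <;> simp [swapSum, selectSum, hi]

lemma swapSum_comp_selectSum (A B : Finset ι) : swapSum B ∘ selectSum A = selectSum (A ∆ B) := by
  funext i
  by_cases hA : i ∈ A <;> by_cases hB : i ∈ B <;>
    simp [swapSum, selectSum, mem_symmDiff, hA, hB]

lemma Finset.symmDiff_singleton_eq_insert {A : Finset ι} {j : ι} (hj : j ∉ A) :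
    A ∆ {j} = insert j A := by
  ext i
  by_cases hi : i = j <;> simp [mem_symmDiff, hi, hj]

lemma Finset.insert_symmDiff_singleton {A : Finset ι} {j : ι} (hj : j ∉ A) :
    insert j A ∆ {j} = A := by
  ext i
  by_cases hi : i = j <;> simp [mem_symmDiff, hi, hj]

end SwapCoordinates

section Resampling

variable {Ω 𝒳 : Type*} [MeasurableSpace Ω] [MeasurableSpace 𝒳] {μ : Measure Ω}

lemma ProbabilityTheory.iIndepFun.indepFun_sumElim {ι κ : Type*} [Fintype ι] [Fintype κ]
    {X : ι → Ω → 𝒳} {X' : κ → Ω → 𝒳} (h : iIndepFun (Sum.elim X X') μ)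
    (hm : ∀ s, AEMeasurable (Sum.elim X X' s) μ) :
    IndepFun (fun ω i => X i ω) (fun ω j => X' j ω) μ := by
  have := h.indepFun_finset₀ _ _ (disjoint_map_inl_map_inr univ univ) hm
  exact this.comp (φ := fun y i => y ⟨.inl i, by simp⟩) (ψ := fun y j => y ⟨.inr j, by simp⟩)
    (measurable_pi_lambda _ fun _ => measurable_pi_apply _)
    (measurable_pi_lambda _ fun _ => measurable_pi_apply _)

lemma integral_comp_mul_comp_independent_copy {ι : Type*} [Fintype ι] {X X' : ι → Ω → 𝒳}
    (hindep : iIndepFun (Sum.elim X X') μ) (hid : ∀ i, IdentDistrib (X' i) (X i) μ μ)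
    {g h : (ι → 𝒳) → ℝ} (hg : Measurable g) (hh : Measurable h) :
    ∫ ω, g (fun i => X i ω) * h (fun i => X' i ω) ∂μ =
      (∫ ω, g (fun i => X i ω) ∂μ) * ∫ ω, h (fun i => X i ω) ∂μ := by
  have hX : AEMeasurable (fun ω i => X i ω) μ :=
    aemeasurable_pi_lambda _ fun i => (hid i).aemeasurable_snd
  have hX' : AEMeasurable (fun ω i => X' i ω) μ :=
    aemeasurable_pi_lambda _ fun i => (hid i).aemeasurable_fst
  have hcopy : IdentDistrib (fun ω i => X' i ω) (fun ω i => X i ω) μ μ :=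
    .pi hid (hindep.precomp (g := Sum.inr) Sum.inr_injective)
      (hindep.precomp (g := Sum.inl) Sum.inl_injective)
  have hpair := hindep.indepFun_sumElim fun s => by
    rcases s with i | i
    exacts [(hid i).aemeasurable_snd, (hid i).aemeasurable_fst]
  rw [hpair.integral_fun_comp_mul_comp hX hX' hg.aestronglyMeasurable hh.aestronglyMeasurable]
  exact congrArg _ (hcopy.comp hh).integral_eq

variable {ι : Type*} [DecidableEq ι]

lemma identDistrib_resample_symmDiff [Fintype ι] {X X' : ι → Ω → 𝒳} {R : Finset ι → Ω → ι → 𝒳}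
    (hindep : iIndepFun (Sum.elim X X') μ) (hid : ∀ i, IdentDistrib (X' i) (X i) μ μ)
    (hR : ∀ A ω i, R A ω i = if i ∈ A then X' i ω else X i ω) (B : Finset ι) :
    IdentDistrib (fun ω A => R (A ∆ B) ω) (fun ω A => R A ω) μ μ := by
  obtain rfl : R = fun A ω i => Sum.elim X X' (selectSum A i) ω := by
    funext A ω i
    by_cases hi : i ∈ A <;> simp [hR, selectSum, hi]
  have hswap : IdentDistrib (fun ω s => Sum.elim X X' (swapSum B s) ω)
      (fun ω s => Sum.elim X X' s ω) μ μ := by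
    refine IdentDistrib.pi (fun s => ?_) (hindep.precomp (swapSum_involutive B).injective) hindep
    rcases s with i | i <;> by_cases hi : i ∈ B
    · simpa [swapSum, selectSum, hi] using hid i
    · simpa [swapSum, selectSum, hi] using .refl (hid i).aemeasurable_snd
    · simpa [swapSum, selectSum, hi] using (hid i).symm
    · simpa [swapSum, selectSum, hi] using .refl (hid i).aemeasurable_fst
  have hsel : Measurable fun (y : ι ⊕ ι → 𝒳) (A : Finset ι) => y ∘ selectSum A := by
    fun_prop
  convert hswap.comp hsel using 1
  · funext ω A
    simp [← swapSum_comp_selectSum, Function.comp_def]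
  · rfl

section ResamplingFamily

variable {R : Finset ι → Ω → ι → 𝒳}

lemma integral_comp_resample_symmDiff
    (hinv : ∀ B, IdentDistrib (fun ω A => R (A ∆ B) ω) (fun ω A => R A ω) μ μ)
    {Φ : (Finset ι → ι → 𝒳) → ℝ} (hΦ : Measurable Φ) (B : Finset ι) :
    ∫ ω, Φ (fun A => R (A ∆ B) ω) ∂μ = ∫ ω, Φ (fun A => R A ω) ∂μ :=
  ((hinv B).comp hΦ).integral_eq

lemma memLp_resample
    (hinv : ∀ B, IdentDistrib (fun ω A => R (A ∆ B) ω) (fun ω A => R A ω) μ μ)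
    {g : (ι → 𝒳) → ℝ} (hg : Measurable g) {p : ℝ≥0∞}
    (h : MemLp (fun ω => g (R ∅ ω)) p μ) (A : Finset ι) : MemLp (fun ω => g (R A ω)) p μ := by
  have hA : (∅ : Finset ι) ∆ A = A := bot_symmDiff A
  simpa [Function.comp_def, hA] using
    ((hinv A).comp (hg.comp (measurable_pi_apply ∅))).memLp_iff.2 h

lemma integral_sub_mul_sub_resample
    (hinv : ∀ B, IdentDistrib (fun ω A => R (A ∆ B) ω) (fun ω A => R A ω) μ μ)
    {g h : (ι → 𝒳) → ℝ} (hg : Measurable g) (hh : Measurable h)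
    (hg2 : ∀ A, MemLp (fun ω => g (R A ω)) 2 μ) (hh2 : ∀ A, MemLp (fun ω => h (R A ω)) 2 μ)
    {A : Finset ι} {j : ι} (hj : j ∉ A) :
    ∫ ω, (g (R ∅ ω) - g (R {j} ω)) * (h (R A ω) - h (R (insert j A) ω)) ∂μ =
      2 * (∫ ω, g (R ∅ ω) * h (R A ω) ∂μ - ∫ ω, g (R ∅ ω) * h (R (insert j A) ω) ∂μ) := by
  set D := fun ω => h (R A ω) - h (R (insert j A) ω)
  have hD : MemLp D 2 μ := (hh2 A).sub (hh2 _)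
  have hint {u v : Ω → ℝ} (hu : MemLp u 2 μ) (hv : MemLp v 2 μ) :
      Integrable (fun ω => u ω * v ω) μ :=
    hu.integrable_mul hv
  -- Resampling by `{j}` exchanges `R ∅` with `R {j}` and `R A` with `R (insert j A)`.
  have hswap : ∫ ω, g (R {j} ω) * D ω ∂μ = -∫ ω, g (R ∅ ω) * D ω ∂μ := by
    have := integral_comp_resample_symmDiff hinv
      (Φ := fun F => g (F {j}) * (h (F A) - h (F (insert j A)))) (by fun_prop) {j}
    rw [← this, ← integral_neg]
    simp only [symmDiff_self, Finset.symmDiff_singleton_eq_insert hj,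
      Finset.insert_symmDiff_singleton hj, D]
    congr 1 with ω
    simp only [Finset.bot_eq_empty]
    ring
  calc _ = ∫ ω, g (R ∅ ω) * D ω - g (R {j} ω) * D ω ∂μ := by simp only [sub_mul, D]
    _ = 2 * ∫ ω, g (R ∅ ω) * D ω ∂μ := by
      rw [integral_sub (hint (hg2 ∅) hD) (hint (hg2 {j}) hD), hswap]
      ring
    _ = _ := by
      rw [integral_congr_ae (.of_forall fun ω => mul_sub _ _ _),
        integral_sub (hint (hg2 ∅) (hh2 A)) (hint (hg2 ∅) (hh2 _))]

theorem integral_resampling_sum [Fintype ι]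
    (hinv : ∀ B, IdentDistrib (fun ω A => R (A ∆ B) ω) (fun ω A => R A ω) μ μ)
    {g h : (ι → 𝒳) → ℝ} (hg : Measurable g) (hh : Measurable h)
    (hg2 : MemLp (fun ω => g (R ∅ ω)) 2 μ) (hh2 : MemLp (fun ω => h (R ∅ ω)) 2 μ) :
    ∫ ω, (1 / 2) * ∑ A ∈ (univ : Finset ι).powerset.filter (· ≠ univ),
      resamplingWeight (Fintype.card ι) A.card *
        ∑ j ∈ Aᶜ, (g (R ∅ ω) - g (R {j} ω)) * (h (R A ω) - h (R (insert j A) ω)) ∂μ =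
      ∫ ω, g (R ∅ ω) * h (R ∅ ω) ∂μ - ∫ ω, g (R ∅ ω) * h (R univ ω) ∂μ := by
  have hg2' := memLp_resample hinv hg hg2
  have hh2' := memLp_resample hinv hh hh2
  have hint (A : Finset ι) (j : ι) : Integrable
      (fun ω => (g (R ∅ ω) - g (R {j} ω)) * (h (R A ω) - h (R (insert j A) ω))) μ :=
    ((hg2' ∅).sub (hg2' {j})).integrable_mul ((hh2' A).sub (hh2' _))
  set a := fun B => ∫ ω, g (R ∅ ω) * h (R B ω) ∂μ
  have hterm (A : Finset ι) : ∫ ω, resamplingWeight (Fintype.card ι) A.card *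
      ∑ j ∈ Aᶜ, (g (R ∅ ω) - g (R {j} ω)) * (h (R A ω) - h (R (insert j A) ω)) ∂μ =
      2 * (resamplingWeight (Fintype.card ι) A.card * ∑ j ∈ Aᶜ, (a A - a (insert j A))) := by
    rw [integral_const_mul, integral_finsetSum _ fun j _ => hint A j,
      sum_congr rfl fun j hj => integral_sub_mul_sub_resample hinv hg hh hg2' hh2'
        (mem_compl.1 hj), ← mul_sum]
    ring
  rw [integral_const_mul, integral_finsetSum _ fun A _ =>
      (integrable_finsetSum _ fun j _ => hint A j).const_mul _,
    sum_congr rfl fun A _ => hterm A, ← mul_sum, sum_resamplingWeight_mul_sum_sub_insert]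
  ring

end ResamplingFamily

end Resampling

theorem expectation_T_eq_covariance_matrix_general {Ω : Type*} {𝒳 : Type*} [MeasurableSpace Ω]
    [m𝒳 : MeasurableSpace 𝒳] {μ : Measure Ω}
    {n d : ℕ} (X X' : Fin n → Ω → 𝒳)
    (hindep : iIndepFun (Sum.elim X X') μ)
    (hid : ∀ i, IdentDistrib (X' i) (X i) μ μ)
    (f : (Fin n → 𝒳) → EuclideanSpace ℝ (Fin d)) (hf : Measurable f)
    (hf2 : ∀ k : Fin d, MemLp (fun ω => f (fun i => X i ω) k) 2 μ)
    (XA : Finset (Fin n) → Ω → Fin n → 𝒳)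
    (hXA : ∀ A ω i, XA A ω i = if i ∈ A then X' i ω else X i ω)
    (T : Ω → Matrix (Fin d) (Fin d) ℝ)
    (hT : ∀ ω k l, T ω k l =
      (1 / 2) * ∑ A ∈ (Finset.univ : Finset (Fin n)).powerset.filter (· ≠ Finset.univ),
        (1 / ((n.choose A.card : ℝ) * (n - A.card))) *
          ∑ j ∈ Aᶜ, (f (fun i => X i ω) k - f (XA {j} ω) k) *
            (f (XA A ω) l - f (XA (insert j A) ω) l)) :
    ∀ k l : Fin d, ∫ ω, T ω k l ∂μ =
      (∫ ω, f (fun i => X i ω) k * f (fun i => X i ω) l ∂μ) -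
        (∫ ω, f (fun i => X i ω) k ∂μ) * ∫ ω, f (fun i => X i ω) l ∂μ := by
  intro k l
  have hinv := identDistrib_resample_symmDiff hindep hid hXA
  have hXA_empty (ω : Ω) : XA ∅ ω = fun i => X i ω := funext fun i => by simp [hXA]
  have hXA_univ (ω : Ω) : XA univ ω = fun i => X' i ω := funext fun i => by simp [hXA]
  have hfk (k : Fin d) : Measurable fun v => f v k := by fun_prop
  have hsum := integral_resampling_sum hinv (hfk k) (hfk l)
    (by simpa only [hXA_empty] using hf2 k) (by simpa only [hXA_empty] using hf2 l)
  simp only [hXA_empty, hXA_univ, Fintype.card_fin] at hsum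
  simp only [hT]
  refine hsum.trans ?_
  rw [integral_comp_mul_comp_independent_copy hindep hid (hfk k) (hfk l)]

/-- `E[T]` equals the covariance matrix of `W = f(X)`, where
`T = (1/2) ∑_{A ⊊ [n]} k_{n,A} ∑_{j∉A} [Δ_j f(X)][Δ_j f(X^A)]ᵀ`. -/
theorem expectation_T_eq_covariance_matrix {Ω : Type*} {𝒳 : Type*} [MeasurableSpace Ω]
    [m𝒳 : MeasurableSpace 𝒳] {μ : Measure Ω} [IsProbabilityMeasure μ]
    {n d : ℕ} (X X' : Fin n → Ω → 𝒳)
    (hX : ∀ i, Measurable (X i)) (hX' : ∀ i, Measurable (X' i))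
    (hindep : iIndepFun (Sum.elim X X') μ)
    (hid : ∀ i, IdentDistrib (X' i) (X i) μ μ)
    (f : (Fin n → 𝒳) → EuclideanSpace ℝ (Fin d)) (hf : Measurable f)
    (hf2 : ∀ k : Fin d, MemLp (fun ω => f (fun i => X i ω) k) 2 μ)
    (hcent : ∀ k : Fin d, ∫ ω, f (fun i => X i ω) k ∂μ = 0)
    (XA : Finset (Fin n) → Ω → Fin n → 𝒳)
    (hXA : ∀ A ω i, XA A ω i = if i ∈ A then X' i ω else X i ω)
    (T : Ω → Matrix (Fin d) (Fin d) ℝ)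
    (hT : ∀ ω k l, T ω k l =
      (1 / 2) * ∑ A ∈ (Finset.univ : Finset (Fin n)).powerset.filter (· ≠ Finset.univ),
        (1 / ((n.choose A.card : ℝ) * (n - A.card))) *
          ∑ j ∈ Aᶜ, (f (fun i => X i ω) k - f (XA {j} ω) k) *
            (f (XA A ω) l - f (XA (insert j A) ω) l)) :
    ∀ k l : Fin d, ∫ ω, T ω k l ∂μ =
      (∫ ω, f (fun i => X i ω) k * f (fun i => X i ω) l ∂μ) -
        (∫ ω, f (fun i => X i ω) k ∂μ) * ∫ ω, f (fun i => X i ω) l ∂μ :=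
  expectation_T_eq_covariance_matrix_general (m𝒳 := m𝒳) X X' hindep hid f hf hf2 XA hXA T hT
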